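/- arXiv:1301.2171 — 3 statements merged into one kernel-verified Lean document; each statement's English description precedes it below -/
import Mathlib

section
/- Let Ω be a countably infinite set. The set U = {f ∈ Ω^Ω : d(f) = ∞ or 0 < c(f) < ∞} ∪ Sym(Ω) is closed under composition, i.e. U is a subsemigroup of Ω^Ω. -/
/-!
Setting: `Ω` is a countably infinite set, `Function.End Ω = Ω → Ω` is the full
transformation semigroup (a subset is closed under composition in one order iff
it is closed in the other, so the lattice of subsemigroups is unaffected by the
left-to-right convention of the paper).
-/

open Cardinal

/-- A transversal of `f`: a set on which `f` is injective and whose image is all of `Ωf`. -/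
def IsTransversal {Ω : Type*} (f : Ω → Ω) (T : Set Ω) : Prop :=
  Set.InjOn f T ∧ f '' T = Set.range f

/-- The defect `d(f) = |Ω \ Ωf|`. -/
noncomputable def defect {Ω : Type*} (f : Ω → Ω) : Cardinal :=
  #((Set.range f)ᶜ : Set Ω)

/-- The collapse `c(f) = |Ω \ Σ|` for a transversal `Σ` of `f` (the value is
independent of the choice of transversal, so the infimum is the common value). -/
noncomputable def collapse {Ω : Type*} (f : Ω → Ω) : Cardinal :=
  ⨅ T : {T : Set Ω // IsTransversal f T}, #(T.1ᶜ : Set Ω)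

/-- The infinite contraction index `k(f) = |{α : αf⁻¹ infinite}|`. -/
noncomputable def contract {Ω : Type*} (f : Ω → Ω) : Cardinal :=
  #({α : Ω | (f ⁻¹' {α}).Infinite} : Set Ω)

def S1 {Ω : Type*} : Set (Function.End Ω) := {f | collapse f = 0 ∨ 0 < defect f}
def S2 {Ω : Type*} : Set (Function.End Ω) := {f | 0 < collapse f ∨ defect f = 0}
def S3 {Ω : Type*} : Set (Function.End Ω) := {f | collapse f < ℵ₀ ∨ ℵ₀ ≤ defect f}
def S4 {Ω : Type*} : Set (Function.End Ω) := {f | ℵ₀ ≤ collapse f ∨ defect f < ℵ₀}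
def S5 {Ω : Type*} : Set (Function.End Ω) := {f | contract f < ℵ₀}

/-- `Sym(Ω)`, the bijections of `Ω`. -/
def SymOmega {Ω : Type*} : Set (Function.End Ω) := {f | Function.Bijective f}

/-- `U = {f : d(f) = ∞ or 0 < c(f) < ∞} ∪ Sym(Ω)`. -/
def SetU {Ω : Type*} : Set (Function.End Ω) :=
  {f | ℵ₀ ≤ defect f ∨ (0 < collapse f ∧ collapse f < ℵ₀)} ∪ SymOmega

/-- `V = {f : c(f) = ∞ or 0 < d(f) < ∞} ∪ Sym(Ω)`. -/
def SetV {Ω : Type*} : Set (Function.End Ω) :=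
  {f | ℵ₀ ≤ collapse f ∨ (0 < defect f ∧ defect f < ℵ₀)} ∪ SymOmega

/-- `S_{1,2,3,4,5}`. -/
def S12345 {Ω : Type*} : Set (Function.End Ω) := S1 ∩ S2 ∩ S3 ∩ S4 ∩ S5

/-- The family `S_1, …, S_5` indexed by `Fin 5`. -/
def SS {Ω : Type*} : Fin 5 → Set (Function.End Ω) := ![S1, S2, S3, S4, S5]

/-!
Collapse `0` means injectivity (a transversal of minimal size exists), and finite collapse means
injectivity off a finite set. So every element of `U` has infinite defect or finite collapse.
Infinite defect survives composition with anything on the inside and with maps of finite collapse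
on the outside; finite collapse is preserved by composition; and a composite fails to be
injective as soon as its inner factor does, or its outer factor does and the inner one is onto.
-/

open Cardinal Set Function

section Transversal

variable {Ω : Type*} {f g : Ω → Ω}

theorem isTransversal_iff_bijOn {T : Set Ω} : IsTransversal f T ↔ BijOn f T (range f) :=
  ⟨fun h => ⟨h.2 ▸ mapsTo_image f T, h.1, h.2.symm.subset⟩, fun h => ⟨h.injOn, h.image_eq⟩⟩

theorem Set.InjOn.exists_isTransversal_superset {S : Set Ω} (h : InjOn f S) :
    ∃ T, S ⊆ T ∧ IsTransversal f T := by
  obtain ⟨T, hST, -, hT⟩ := h.bijOn_image.exists_extend_of_subset (subset_univ S)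
    (image_subset_range f S) (by rw [← image_univ]; exact surjOn_image f univ)
  exact ⟨T, hST, isTransversal_iff_bijOn.2 hT⟩

theorem collapse_le_mk_compl {T : Set Ω} (h : IsTransversal f T) : collapse f ≤ #(Tᶜ : Set Ω) :=
  ciInf_le' _ (⟨T, h⟩ : {T : Set Ω // IsTransversal f T})

theorem exists_isTransversal_mk_compl_eq_collapse (f : Ω → Ω) :
    ∃ T, IsTransversal f T ∧ #(Tᶜ : Set Ω) = collapse f := by
  obtain ⟨T, -, hT⟩ := (injOn_empty f).exists_isTransversal_superset
  have : Nonempty {T : Set Ω // IsTransversal f T} := ⟨⟨T, hT⟩⟩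
  obtain ⟨⟨T', hT'⟩, h⟩ := ciInf_mem fun T : {T : Set Ω // IsTransversal f T} => #(T.1ᶜ : Set Ω)
  exact ⟨T', hT', h⟩

theorem collapse_eq_zero_iff : collapse f = 0 ↔ Injective f := by
  refine ⟨fun h => ?_, fun hf => ?_⟩
  · obtain ⟨T, hT, hT0⟩ := exists_isTransversal_mk_compl_eq_collapse f
    rw [h, mk_set_eq_zero_iff, compl_empty_iff] at hT0
    exact injOn_univ.1 (hT0 ▸ hT.1)
  · refine nonpos_iff_eq_zero.1 ?_
    simpa using collapse_le_mk_compl (f := f) ⟨hf.injOn, image_univ⟩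

theorem collapse_pos_iff : 0 < collapse f ↔ ¬Injective f := by
  rw [pos_iff_ne_zero, Ne, collapse_eq_zero_iff]

theorem collapse_pos_comp_of_right (f : Ω → Ω) (hg : 0 < collapse g) : 0 < collapse (f ∘ g) :=
  collapse_pos_iff.2 fun h => collapse_pos_iff.1 hg h.of_comp

theorem collapse_pos_comp_of_left (hf : 0 < collapse f) (hg : Surjective g) :
    0 < collapse (f ∘ g) :=
  collapse_pos_iff.2 fun h => collapse_pos_iff.1 hf (h.of_comp_right hg)

theorem collapse_lt_aleph0_iff : collapse f < ℵ₀ ↔ ∃ F : Set Ω, F.Finite ∧ InjOn f Fᶜ := by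
  refine ⟨fun h => ?_, fun ⟨F, hF, hinj⟩ => ?_⟩
  · obtain ⟨T, hT, hTc⟩ := exists_isTransversal_mk_compl_eq_collapse f
    exact ⟨Tᶜ, lt_aleph0_iff_set_finite.1 (hTc ▸ h), (compl_compl T).symm ▸ hT.1⟩
  · obtain ⟨T, hFT, hT⟩ := hinj.exists_isTransversal_superset
    calc collapse f ≤ #(Tᶜ : Set Ω) := collapse_le_mk_compl hT
      _ ≤ #F := mk_le_mk_of_subset (compl_subset_comm.1 hFT)
      _ < ℵ₀ := lt_aleph0_iff_set_finite.2 hF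

theorem collapse_lt_aleph0_of_injective (hf : Injective f) : collapse f < ℵ₀ :=
  collapse_eq_zero_iff.2 hf ▸ aleph0_pos

theorem collapse_comp_lt_aleph0 (hf : collapse f < ℵ₀) (hg : collapse g < ℵ₀) :
    collapse (f ∘ g) < ℵ₀ := by
  obtain ⟨F, hF, hfF⟩ := collapse_lt_aleph0_iff.1 hf
  obtain ⟨G, hG, hgG⟩ := collapse_lt_aleph0_iff.1 hg
  have hbad : (Gᶜ ∩ g ⁻¹' F).Finite :=
    (hF.subset (image_subset_iff.2 inter_subset_right)).of_finite_image
      (hgG.mono inter_subset_left)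
  refine collapse_lt_aleph0_iff.2 ⟨G ∪ (Gᶜ ∩ g ⁻¹' F), hG.union hbad, ?_⟩
  rw [compl_union]
  exact hfF.comp (hgG.mono inter_subset_left) fun x hx hxF => hx.2 ⟨hx.1, hxF⟩

end Transversal

section Defect

variable {Ω : Type*} {f g : Ω → Ω}

theorem aleph0_le_defect_iff : ℵ₀ ≤ defect f ↔ (range f)ᶜ.Infinite := by
  rw [defect, ← infinite_iff, infinite_coe_iff]

theorem defect_le_defect_comp (f g : Ω → Ω) : defect f ≤ defect (f ∘ g) :=
  mk_le_mk_of_subset (compl_subset_compl.2 (range_comp_subset_range g f))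

theorem aleph0_le_defect_comp (hf : collapse f < ℵ₀) (hg : ℵ₀ ≤ defect g) :
    ℵ₀ ≤ defect (f ∘ g) := by
  obtain ⟨F, hF, hfF⟩ := collapse_lt_aleph0_iff.1 hf
  rw [aleph0_le_defect_iff] at hg ⊢
  -- for `β ∉ range g ∪ F`, `f (g x) = f β` forces `g x ∈ F`, as `f` is injective off `F`
  have hmissed : f '' ((range g)ᶜ \ F) \ f '' F ⊆ (range (f ∘ g))ᶜ := by
    rintro _ ⟨⟨β, ⟨hβg, hβF⟩, rfl⟩, hβ⟩ ⟨x, hx⟩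
    have hgx : g x ∉ F := fun h => hβ ⟨g x, h, hx⟩
    exact hβg ⟨x, hfF hgx hβF hx⟩
  exact (((hg.sdiff hF).image (hfF.mono fun _ hx => hx.2)).sdiff (hF.image f)).mono hmissed

end Defect

theorem stmt1_general (Ω : Type) :
    ∀ f ∈ (SetU : Set (Function.End Ω)), ∀ g ∈ (SetU : Set (Function.End Ω)),
      f * g ∈ (SetU : Set (Function.End Ω)) := by
  intro f hf g hg
  simp only [SetU, SymOmega, mem_union, mem_ofPred_eq, or_assoc] at hf hg ⊢
  rcases hf with hfd | hf
  · exact .inl (hfd.trans (defect_le_defect_comp f g))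
  have hfc : collapse f < ℵ₀ := hf.elim And.right (collapse_lt_aleph0_of_injective ·.1)
  rcases hg with hgd | ⟨hg0, hgc⟩ | hgb
  · exact .inl (aleph0_le_defect_comp hfc hgd)
  · exact .inr (.inl ⟨collapse_pos_comp_of_right f hg0, collapse_comp_lt_aleph0 hfc hgc⟩)
  rcases hf with ⟨hf0, -⟩ | hfb
  · exact .inr (.inl ⟨collapse_pos_comp_of_left hf0 hgb.2,
      collapse_comp_lt_aleph0 hfc (collapse_lt_aleph0_of_injective hgb.1)⟩)
  · exact .inr (.inr (hfb.comp hgb))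

/-- `U = {f : d(f) = ∞ or 0 < c(f) < ∞} ∪ Sym(Ω)` is closed under composition. -/
theorem stmt1 (Ω : Type) [Countable Ω] [Infinite Ω] :
    ∀ f ∈ (SetU : Set (Function.End Ω)), ∀ g ∈ (SetU : Set (Function.End Ω)),
      f * g ∈ (SetU : Set (Function.End Ω)) :=
  stmt1_general Ω
end

section
/- Let Ω be a countably infinite set. The set V = {f ∈ Ω^Ω : c(f) = ∞ or 0 < d(f) < ∞} ∪ Sym(Ω) is closed under composition, i.e. V is a subsemigroup of Ω^Ω. -/
/-!
Setting: `Ω` is a countably infinite set, `Function.End Ω = Ω → Ω` is the full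
transformation semigroup (a subset is closed under composition in one order iff
it is closed in the other, so the lattice of subsemigroups is unaffected by the
left-to-right convention of the paper).
-/

open Cardinal

/-!
The collapse `c(f)` is infinite exactly when `f` is injective on no cofinite set, and a map in `V`
that is not of this kind has cofinite range. If `g` is injective on no cofinite set, neither is
`f ∘ g`; if moreover `g` has cofinite range, `f ∘ g` being injective on a cofinite set `T` makes
`f` injective on the cofinite set `g '' T`. In the remaining case `f` and `g` both have cofinite
range, hence so does `f ∘ g`, and a surjective `f ∘ g` forces `f` and then `g` to be bijective.
-/

open Function Set

section Collapse

variable {α β γ : Type*}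

def InjOnCofinite (f : α → β) : Prop :=
  ∃ T : Set α, Tᶜ.Finite ∧ InjOn f T

theorem InjOnCofinite.of_comp {f : β → γ} {g : α → β} (h : InjOnCofinite (f ∘ g)) :
    InjOnCofinite g :=
  let ⟨T, hT, hinj⟩ := h
  ⟨T, hT, hinj.of_comp⟩

theorem InjOnCofinite.of_comp_left {f : β → γ} {g : α → β} (h : InjOnCofinite (f ∘ g))
    (hg : (range g)ᶜ.Finite) : InjOnCofinite f := by
  obtain ⟨T, hT, hinj⟩ := h
  refine ⟨g '' T, ?_, hinj.image_of_comp⟩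
  have hsub : (g '' T)ᶜ ⊆ (range g)ᶜ ∪ g '' Tᶜ := by
    intro x hx
    by_cases hr : x ∈ range g
    · obtain ⟨y, rfl⟩ := hr
      exact Or.inr ⟨y, fun hy => hx ⟨y, hy, rfl⟩, rfl⟩
    · exact Or.inl hr
  exact (hg.union (hT.image g)).subset hsub

theorem exists_isTransversal (f : α → α) : ∃ S, IsTransversal f S := by
  obtain ⟨S, himage, hinj⟩ := exists_image_eq_and_injOn univ f
  exact ⟨S, hinj, himage.trans image_univ⟩

theorem IsTransversal.compl_finite {f : α → α} {S T : Set α} (hS : IsTransversal f S)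
    (hT : Tᶜ.Finite) (hinj : InjOn f T) : Sᶜ.Finite := by
  -- a point of `T \ S` shares its image with a point of `S`, which must lie outside `T`
  have hsub : Sᶜ ⊆ Tᶜ ∪ (T ∩ f ⁻¹' (f '' Tᶜ)) := by
    intro x hxS
    by_cases hxT : x ∈ T
    · obtain ⟨s, hs, hfs⟩ : f x ∈ f '' S := hS.2 ▸ mem_range_self x
      have hsT : s ∉ T := fun hsT => hxS (hinj hsT hxT hfs ▸ hs)
      exact Or.inr ⟨hxT, s, hsT, hfs⟩
    · exact Or.inl hxT
  have hfin : (T ∩ f ⁻¹' (f '' Tᶜ)).Finite :=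
    Finite.of_finite_image
      ((hT.image f).subset ((image_mono inter_subset_right).trans (image_preimage_subset f _)))
      (hinj.mono inter_subset_left)
  exact (hT.union hfin).subset hsub

theorem collapse_lt_aleph0_iff_s2 (f : α → α) : collapse f < ℵ₀ ↔ InjOnCofinite f := by
  obtain ⟨S, hS⟩ := exists_isTransversal f
  constructor
  · intro hc
    have : Nonempty {T : Set α // IsTransversal f T} := ⟨⟨S, hS⟩⟩
    obtain ⟨⟨T, hT⟩, hmin⟩ := ciInf_mem fun T : {T : Set α // IsTransversal f T} => #(T.1ᶜ : Set α)
    rw [collapse, ← hmin, lt_aleph0_iff_set_finite] at hc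
    exact ⟨T, hc, hT.1⟩
  · rintro ⟨T, hT, hinj⟩
    calc collapse f ≤ #(Sᶜ : Set α) :=
          ciInf_le (OrderBot.bddBelow _) (⟨S, hS⟩ : {T : Set α // IsTransversal f T})
      _ < ℵ₀ := lt_aleph0_iff_set_finite.mpr (hS.compl_finite hT hinj)

theorem pos_defect_iff (f : α → α) : 0 < defect f ↔ ¬Surjective f := by
  rw [defect, pos_iff_ne_zero, mk_ne_zero_iff, nonempty_coe_sort, nonempty_compl, Ne,
    range_eq_univ]

theorem compl_range_comp_finite {f : β → γ} {g : α → β} (hf : (range f)ᶜ.Finite)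
    (hg : (range g)ᶜ.Finite) : (range (f ∘ g))ᶜ.Finite := by
  refine (hf.union (hg.image f)).subset fun x hx => ?_
  by_cases hxf : x ∈ range f
  · obtain ⟨y, rfl⟩ := hxf
    exact Or.inr ⟨y, fun ⟨z, hz⟩ => hx ⟨z, by simp only [comp_apply, hz]⟩, rfl⟩
  · exact Or.inl hxf

/-- `0 < d(f) < ∞` or `f ∈ Sym(Ω)` amounts to: cofinite range, and bijective if surjective. -/
theorem mem_SetV_iff (f : α → α) :
    f ∈ (SetV : Set (Function.End α)) ↔
      ¬InjOnCofinite f ∨ ((range f)ᶜ.Finite ∧ (Surjective f → Injective f)) := by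
  have hsurj : Surjective f → (range f)ᶜ.Finite := fun h => by simp [h.range_eq]
  change (ℵ₀ ≤ collapse f ∨ (0 < defect f ∧ defect f < ℵ₀)) ∨ Bijective f ↔ _
  rw [← not_lt, collapse_lt_aleph0_iff_s2, pos_defect_iff, defect, lt_aleph0_iff_set_finite, Bijective]
  tauto

end Collapse

theorem stmt2_general (Ω : Type) :
    ∀ f ∈ (SetV : Set (Function.End Ω)), ∀ g ∈ (SetV : Set (Function.End Ω)),
      f * g ∈ (SetV : Set (Function.End Ω)) := by
  intro f hf g hg
  rw [Function.End.mul_def]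
  refine (mem_SetV_iff (f ∘ g)).2 ?_
  replace hf := (mem_SetV_iff f).1 hf
  replace hg := (mem_SetV_iff g).1 hg
  rcases hg with hg | ⟨hg_fin, hg_bij⟩
  · exact Or.inl fun h => hg h.of_comp
  rcases hf with hf | ⟨hf_fin, hf_bij⟩
  · exact Or.inl fun h => hf (h.of_comp_left hg_fin)
  refine Or.inr ⟨compl_range_comp_finite hf_fin hg_fin, fun hfg => ?_⟩
  have hf_inj : Injective f := hf_bij hfg.of_comp
  exact hf_inj.comp (hg_bij (hfg.of_comp_left hf_inj))

/-- `V = {f : c(f) = ∞ or 0 < d(f) < ∞} ∪ Sym(Ω)` is closed under composition. -/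
theorem stmt2 (Ω : Type) [Countable Ω] [Infinite Ω] :
    ∀ f ∈ (SetV : Set (Function.End Ω)), ∀ g ∈ (SetV : Set (Function.End Ω)),
      f * g ∈ (SetV : Set (Function.End Ω)) :=
  stmt2_general Ω
end

section
/- Let Ω be a countably infinite set and let u, f ∈ Ω^Ω. If u is injective, c(f) < ∞, and d(u) = d(f) = ∞, then f belongs to the subsemigroup of Ω^Ω generated by S_{1,2,3,4,5} ∪ {u}. -/
/-!
Setting: `Ω` is a countably infinite set, `Function.End Ω = Ω → Ω` is the full
transformation semigroup (a subset is closed under composition in one order iff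
it is closed in the other, so the lattice of subsemigroups is unaffected by the
left-to-right convention of the paper).
-/

open Cardinal

/-!
Since `u` is injective, `f = g ∘ u` (that is, `f = ug` in the left-to-right notation) for any `g`
extending `f ∘ u⁻¹` from `Ωu`, and `g` is free on the infinite set `Ω \ Ωu`. Enumerate `Ω \ Ωu` as
`c(n, b)` and `Ω \ Ωf` as `e(n, b)` (`n : ℕ`, `b : Bool`) and send both `c(n, false)` and
`c(n, true)` to `e(n, false)`. Then `g` collapses infinitely many pairs, misses every `e(n, true)`,
and its fibres are finite because those of `f` are (`c(f) < ∞`). So `d(g) = c(g) = ∞` and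
`k(g) = 0`, whence `g ∈ S_{1,2,3,4,5}`.
-/

open Cardinal Function

section Transformations

variable {Ω : Type*}

lemma exists_isTransversal_s5 (f : Ω → Ω) : ∃ T, IsTransversal f T := by
  obtain ⟨T, -, hT⟩ := Set.exists_subset_bijOn Set.univ f
  exact ⟨T, hT.injOn, by rw [hT.image_eq, Set.image_univ]⟩

instance (f : Ω → Ω) : Nonempty {T : Set Ω // IsTransversal f T} :=
  (exists_isTransversal_s5 f).elim fun T hT => ⟨⟨T, hT⟩⟩

lemma finite_preimage_singleton_of_collapse_lt_aleph0 {f : Ω → Ω} (hf : collapse f < ℵ₀) (a : Ω) :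
    (f ⁻¹' {a}).Finite := by
  obtain ⟨⟨T, hT⟩, hTc⟩ := exists_lt_of_ciInf_lt hf
  have hfibre : (f ⁻¹' {a} ∩ T).Subsingleton := fun x hx y hy =>
    hT.1 hx.2 hy.2 (hx.1.trans hy.1.symm)
  refine (hfibre.finite.union (lt_aleph0_iff_set_finite.mp hTc)).subset fun x hx => ?_
  by_cases hxT : x ∈ T
  exacts [Or.inl ⟨hx, hxT⟩, Or.inr hxT]

/-- Every transversal misses one point of each pair `p (n, false)`, `p (n, true)`. -/
lemma aleph0_le_collapse_of_pairs {g : Ω → Ω} (p : ℕ × Bool → Ω) (hp : Injective p)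
    (hg : ∀ n, g (p (n, false)) = g (p (n, true))) : ℵ₀ ≤ collapse g := by
  refine le_ciInf fun ⟨T, hT⟩ => ?_
  have hmiss : ∀ n, ∃ b, p (n, b) ∉ T := by
    intro n
    by_contra! h
    exact Bool.false_ne_true (congrArg Prod.snd (hp (hT.1 (h false) (h true) (hg n))))
  choose b hb using hmiss
  have hinj : Injective fun n => p (n, b n) := fun n m h => congrArg Prod.fst (hp h)
  exact aleph0_le_mk_iff.mpr (Set.infinite_of_injective_forall_mem hinj hb).to_subtype

lemma contract_eq_zero {g : Ω → Ω} (hg : ∀ a, (g ⁻¹' {a}).Finite) : contract g = 0 := by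
  simp [contract, hg]

lemma mem_S12345_of_aleph0_le {g : Ω → Ω} (hd : ℵ₀ ≤ defect g) (hc : ℵ₀ ≤ collapse g)
    (hk : ∀ a, (g ⁻¹' {a}).Finite) : g ∈ (S12345 : Set (Function.End Ω)) :=
  ⟨⟨⟨⟨Or.inr (aleph0_pos.trans_le hd), Or.inl (aleph0_pos.trans_le hc)⟩, Or.inr hd⟩, Or.inl hc⟩,
    show contract g < ℵ₀ by rw [contract_eq_zero hk]; exact aleph0_pos⟩

end Transformations

section PairExtend

variable {Ω : Type*} (u f : Ω → Ω) (c : ℕ × Bool ≃ ((Set.range u)ᶜ : Set Ω)) (e : ℕ × Bool → Ω)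

open Classical in
noncomputable def pairExtend : Ω → Ω :=
  extend u f fun x => if hx : x ∈ (Set.range u)ᶜ then e ((c.symm ⟨x, hx⟩).1, false) else x

variable {u f}

lemma pairExtend_comp (hu : Injective u) : pairExtend u f c e ∘ u = f :=
  extend_comp hu _ _

lemma pairExtend_apply (q : ℕ × Bool) : pairExtend u f c e (c q) = e (q.1, false) := by
  have hq : ¬∃ a, u a = c q := (c q).2
  simp [pairExtend, extend_apply' _ _ _ hq]

lemma pairExtend_eq_or (hu : Injective u) (x : Ω) :
    (∃ a, pairExtend u f c e x = f a ∧ u a = x) ∨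
      ∃ q, pairExtend u f c e x = e (q.1, false) ∧ c q = x := by
  by_cases hx : x ∈ Set.range u
  · obtain ⟨a, rfl⟩ := hx
    exact Or.inl ⟨a, congrFun (pairExtend_comp c e hu) a, rfl⟩
  · obtain ⟨q, rfl⟩ : ∃ q, (c q : Ω) = x := ⟨c.symm ⟨x, hx⟩, by simp⟩
    exact Or.inr ⟨q, pairExtend_apply c e q, rfl⟩

lemma aleph0_le_defect_pairExtend (hu : Injective u) (he : Injective e)
    (hef : ∀ q, e q ∉ Set.range f) : ℵ₀ ≤ defect (pairExtend u f c e) := by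
  have hmiss : ∀ n, e (n, true) ∈ (Set.range (pairExtend u f c e))ᶜ := by
    rintro n ⟨x, hx⟩
    rcases pairExtend_eq_or c e hu x with ⟨a, ha, -⟩ | ⟨q, hq, -⟩
    · exact hef (n, true) ⟨a, ha.symm.trans hx⟩
    · exact Bool.false_ne_true (congrArg Prod.snd (he (hq.symm.trans hx)))
  have hinj : Injective fun n => e (n, true) := fun n m h => congrArg Prod.fst (he h)
  exact aleph0_le_mk_iff.mpr (Set.infinite_of_injective_forall_mem hinj hmiss).to_subtype

lemma aleph0_le_collapse_pairExtend : ℵ₀ ≤ collapse (pairExtend u f c e) :=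
  aleph0_le_collapse_of_pairs (fun q => c q) (Subtype.val_injective.comp c.injective) fun n => by
    simp only [pairExtend_apply]

lemma finite_preimage_pairExtend (hu : Injective u) (he : Injective e)
    (hf : ∀ a, (f ⁻¹' {a}).Finite) (a : Ω) : (pairExtend u f c e ⁻¹' {a}).Finite := by
  have hcfib : ({q : ℕ × Bool | e (q.1, false) = a}).Finite := by
    have hn : {n | e (n, false) = a}.Subsingleton := fun n hn m hm =>
      congrArg Prod.fst (he (hn.trans (Eq.symm hm)))
    have := hn.finite.prod (Set.finite_univ (α := Bool))
    rwa [Set.prod_univ] at this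
  refine (((hf a).image u).union (hcfib.image fun q => (c q : Ω))).subset fun x hx => ?_
  rcases pairExtend_eq_or c e hu x with ⟨b, hb, rfl⟩ | ⟨q, hq, rfl⟩
  · exact Or.inl ⟨b, hb.symm.trans hx, rfl⟩
  · exact Or.inr ⟨q, hq.symm.trans hx, rfl⟩

end PairExtend

theorem stmt5_general (Ω : Type) [Countable Ω] (u f : Function.End Ω)
    (hu : Function.Injective u) (hcf : collapse f < ℵ₀)
    (hdu : ℵ₀ ≤ defect u) (hdf : ℵ₀ ≤ defect f) :
    f ∈ Subsemigroup.closure (S12345 ∪ {u}) := by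
  have : Infinite ((Set.range u)ᶜ : Set Ω) := aleph0_le_mk_iff.mp hdu
  have : Infinite ((Set.range f)ᶜ : Set Ω) := aleph0_le_mk_iff.mp hdf
  obtain ⟨c⟩ : Nonempty (ℕ × Bool ≃ ((Set.range u)ᶜ : Set Ω)) := nonempty_equiv_of_countable
  obtain ⟨e⟩ : Nonempty (ℕ × Bool ≃ ((Set.range f)ᶜ : Set Ω)) := nonempty_equiv_of_countable
  have he : Injective fun q => (e q : Ω) := Subtype.val_injective.comp e.injective
  set g : Function.End Ω := pairExtend u f c fun q => e q
  have hg : g ∈ S12345 :=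
    mem_S12345_of_aleph0_le (aleph0_le_defect_pairExtend c _ hu he fun q => (e q).2)
      (aleph0_le_collapse_pairExtend c _)
      (finite_preimage_pairExtend c _ hu he (finite_preimage_singleton_of_collapse_lt_aleph0 hcf))
  have hfg : f = g * u := (pairExtend_comp c _ hu).symm
  rw [hfg]
  exact mul_mem (Subsemigroup.subset_closure (Or.inl hg))
    (Subsemigroup.subset_closure (Or.inr rfl))

theorem stmt5 (Ω : Type) [Countable Ω] [Infinite Ω] (u f : Function.End Ω)
    (hu : Function.Injective u) (hcf : collapse f < ℵ₀)
    (hdu : ℵ₀ ≤ defect u) (hdf : ℵ₀ ≤ defect f) :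
    f ∈ Subsemigroup.closure (S12345 ∪ {u}) :=
  stmt5_general Ω u f hu hcf hdu hdf
end
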